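/- Equivalence of the two source terms (Remark A.2). Let φ be smooth with g > 0 and g̊ > 0 everywhere, and let S₀ and S̃₀ be the two source expressions defined below. Then, as an unconditional pointwise identity, S̃₀ − S₀ = −((g̊ − 1)/√g)·[ ∂_u(∂_ūφ·g^{−1/2}) + ∂_ū((∂_uφ + Ψ'(u) − (Ψ'(u))²·∂_ūφ)·g^{−1/2}) ]. In particular, S̃₀ = S₀ at every point whenever φ satisfies the Euler–Lagrange equation ∂_u(∂_ūφ·g^{−1/2}) + ∂_ū((∂_uφ + Ψ'(u) − (Ψ'(u))²·∂_ūφ)·g^{−1/2}) = 0. -/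

import Mathlib

noncomputable section

/-- partial derivative in the first variable (`∂_u`) -/
def pd1 (f : ℝ × ℝ → ℝ) (p : ℝ × ℝ) : ℝ := deriv (fun s => f (s, p.2)) p.1

/-- partial derivative in the second variable (`∂_ū`) -/
def pd2 (f : ℝ × ℝ → ℝ) (p : ℝ × ℝ) : ℝ := deriv (fun s => f (p.1, s)) p.2

/-- the determinant `g = 1 − 2∂_uφ∂_ūφ − 2Ψ'(u)∂_ūφ + (Ψ'(u))²(∂_ūφ)²` -/
def gmet (Ψ : ℝ → ℝ) (φ : ℝ × ℝ → ℝ) (p : ℝ × ℝ) : ℝ :=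
  1 - 2 * pd1 φ p * pd2 φ p - 2 * deriv Ψ p.1 * pd2 φ p
    + (deriv Ψ p.1)^2 * (pd2 φ p)^2

/-- the linear-truncation determinant `g̊ = (1 − Ψ'(u)∂_ūφ)²` -/
def gring (Ψ : ℝ → ℝ) (φ : ℝ × ℝ → ℝ) (p : ℝ × ℝ) : ℝ :=
  (1 - deriv Ψ p.1 * pd2 φ p)^2

/-- inverse metric component `g^{uu} = −(∂_ūφ)²/g` -/
def guu (Ψ : ℝ → ℝ) (φ : ℝ × ℝ → ℝ) (p : ℝ × ℝ) : ℝ :=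
  -(pd2 φ p)^2 / gmet Ψ φ p

/-- inverse metric component `g^{uū} = g^{ūu} = (−1 + Ψ'(u)∂_ūφ + ∂_uφ∂_ūφ)/g` -/
def guub (Ψ : ℝ → ℝ) (φ : ℝ × ℝ → ℝ) (p : ℝ × ℝ) : ℝ :=
  (-1 + deriv Ψ p.1 * pd2 φ p + pd1 φ p * pd2 φ p) / gmet Ψ φ p

/-- inverse metric component `g^{ūū} = −(2Ψ'(u) + ∂_uφ)∂_uφ/g` -/
def gubub (Ψ : ℝ → ℝ) (φ : ℝ × ℝ → ℝ) (p : ℝ × ℝ) : ℝ :=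
  -((2 * deriv Ψ p.1 + pd1 φ p) * pd1 φ p) / gmet Ψ φ p

/-- `g^{−1/2}` as a function of the point -/
def invSqrtg (Ψ : ℝ → ℝ) (φ : ℝ × ℝ → ℝ) (p : ℝ × ℝ) : ℝ :=
  (Real.sqrt (gmet Ψ φ p))⁻¹

/-- the Euler–Lagrange expression
`∂_u(∂_ūφ·g^{−1/2}) + ∂_ū((∂_uφ + Ψ'(u) − (Ψ'(u))²∂_ūφ)·g^{−1/2})` -/
def ELexpr (Ψ : ℝ → ℝ) (φ : ℝ × ℝ → ℝ) (p : ℝ × ℝ) : ℝ :=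
  pd1 (fun q => pd2 φ q * invSqrtg Ψ φ q) p
  + pd2 (fun q => (pd1 φ q + deriv Ψ q.1 - (deriv Ψ q.1)^2 * pd2 φ q) * invSqrtg Ψ φ q) p

/-- the Laplace–Beltrami operator `□_g φ` -/
def BoxG (Ψ : ℝ → ℝ) (φ : ℝ × ℝ → ℝ) (p : ℝ × ℝ) : ℝ :=
  invSqrtg Ψ φ p *
    (pd1 (fun q => Real.sqrt (gmet Ψ φ q) * (guu Ψ φ q * pd1 φ q + guub Ψ φ q * pd2 φ q)) p
     + pd2 (fun q => Real.sqrt (gmet Ψ φ q) * (guub Ψ φ q * pd1 φ q + gubub Ψ φ q * pd2 φ q)) p)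

/-- the source term `S₀(∂²φ,∂φ)` of Proposition 2.1 -/
def S0expr (Ψ : ℝ → ℝ) (φ : ℝ × ℝ → ℝ) (p : ℝ × ℝ) : ℝ :=
  (gring Ψ φ p / (gmet Ψ φ p)^2) * (1 - gmet Ψ φ p) * (deriv Ψ p.1)^2 * pd2 (pd2 φ) p
  + (1 / (gmet Ψ φ p)^2) * (gring Ψ φ p - gmet Ψ φ p) * deriv Ψ p.1 * pd1 φ p * pd2 (pd2 φ) p
  - (gring Ψ φ p / (gmet Ψ φ p)^2) * (deriv Ψ p.1)^3 * pd2 φ p * pd2 (pd2 φ) p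
  + (gring Ψ φ p / (gmet Ψ φ p)^2) * deriv Ψ p.1 * pd2 φ p * pd2 (pd1 φ) p
  + (2 * (gring Ψ φ p - 1) / gmet Ψ φ p) * pd1 (pd2 φ) p
  + (1 / gmet Ψ φ p) * deriv Ψ p.1 * pd2 φ p * pd1 (pd2 φ) p
  + (1 / gmet Ψ φ p) * deriv (deriv Ψ) p.1 * (pd2 φ p)^2
  - (gring Ψ φ p / Real.sqrt (gmet Ψ φ p)) * (deriv Ψ p.1)^2 * pd2 φ p
      * pd2 (invSqrtg Ψ φ) p
  + ((gring Ψ φ p - 1) / Real.sqrt (gmet Ψ φ p)) * pd2 φ p * pd1 (invSqrtg Ψ φ) p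
  + ((gring Ψ φ p - 1) / Real.sqrt (gmet Ψ φ p)) * pd1 φ p * pd2 (invSqrtg Ψ φ) p
  + (1 / Real.sqrt (gmet Ψ φ p)) * deriv Ψ p.1 * (pd2 φ p)^2 * pd1 (invSqrtg Ψ φ) p
  - (1 / Real.sqrt (gmet Ψ φ p)) * deriv Ψ p.1 * pd2 φ p * pd1 φ p * pd2 (invSqrtg Ψ φ) p

/-- the alternative source term `S̃₀(∂²φ,∂φ)` of Proposition A.1 -/
def S0tilde (Ψ : ℝ → ℝ) (φ : ℝ × ℝ → ℝ) (p : ℝ × ℝ) : ℝ :=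
  (1 / (gmet Ψ φ p)^2) * (1 - gmet Ψ φ p) * (deriv Ψ p.1)^2 * pd2 (pd2 φ) p
  + (1 / (gmet Ψ φ p)^2) * (1 - gmet Ψ φ p) * deriv Ψ p.1 * pd1 φ p * pd2 (pd2 φ) p
  - (1 / (gmet Ψ φ p)^2) * (deriv Ψ p.1)^3 * pd2 φ p * pd2 (pd2 φ) p
  + (1 / (gmet Ψ φ p)^2) * deriv Ψ p.1 * pd2 φ p * pd2 (pd1 φ) p
  + (1 / gmet Ψ φ p) * deriv Ψ p.1 * pd2 φ p * pd1 (pd2 φ) p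
  - (1 / Real.sqrt (gmet Ψ φ p)) * (deriv Ψ p.1)^2 * pd2 φ p * pd2 (invSqrtg Ψ φ) p
  + (1 / gmet Ψ φ p) * deriv (deriv Ψ) p.1 * (pd2 φ p)^2
  + (1 / Real.sqrt (gmet Ψ φ p)) * deriv Ψ p.1 * (pd2 φ p)^2 * pd1 (invSqrtg Ψ φ) p
  - (1 / Real.sqrt (gmet Ψ φ p)) * deriv Ψ p.1 * pd2 φ p * pd1 φ p * pd2 (invSqrtg Ψ φ) p

/-!
`S̃₀ − S₀` is `1 − g̊` times an expression linear in the second derivatives of `φ` and in the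
first derivatives of `g^{−1/2}`, and so is the product-rule expansion of the Euler–Lagrange
expression. Comparing the two leaves only `∂_ū g^{−1/2} = −∂_ū g / (2 g^{3/2})`, where `∂_ū g` is
explicit in the second derivatives of `φ`; after `∂_ū∂_uφ = ∂_u∂_ūφ` (Schwarz) what remains is an
identity of rational functions in `√g`.
-/

section PartialDerivatives

variable {f : ℝ × ℝ → ℝ} {p : ℝ × ℝ}

lemma DifferentiableAt.hasDerivAt_pd1 (hf : DifferentiableAt ℝ f p) :
    HasDerivAt (fun s => f (s, p.2)) (pd1 f p) p.1 :=
  (hf.comp p.1 (differentiableAt_id.prodMk (differentiableAt_const p.2))).hasDerivAt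

lemma DifferentiableAt.hasDerivAt_pd2 (hf : DifferentiableAt ℝ f p) :
    HasDerivAt (fun s => f (p.1, s)) (pd2 f p) p.2 :=
  (hf.comp p.2 ((differentiableAt_const p.1).prodMk differentiableAt_id)).hasDerivAt

lemma pd1_eq_fderiv (hf : DifferentiableAt ℝ f p) : pd1 f p = fderiv ℝ f p (1, 0) :=
  (hf.hasFDerivAt.comp_hasDerivAt p.1
    ((hasDerivAt_id p.1).prodMk (hasDerivAt_const p.1 p.2))).deriv

lemma pd2_eq_fderiv (hf : DifferentiableAt ℝ f p) : pd2 f p = fderiv ℝ f p (0, 1) :=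
  (hf.hasFDerivAt.comp_hasDerivAt p.2
    ((hasDerivAt_const p.2 p.1).prodMk (hasDerivAt_id p.2))).deriv

lemma contDiff_pd1 {m n : WithTop ℕ∞} (hf : ContDiff ℝ n f) (hmn : m + 1 ≤ n) :
    ContDiff ℝ m (pd1 f) := by
  have hf' : Differentiable ℝ f := hf.differentiable fun hn => by simp [hn] at hmn
  rw [show pd1 f = fun q => fderiv ℝ f q (1, 0) from funext fun q => pd1_eq_fderiv (hf' q)]
  exact (hf.fderiv_right hmn).clm_apply contDiff_const

lemma contDiff_pd2 {m n : WithTop ℕ∞} (hf : ContDiff ℝ n f) (hmn : m + 1 ≤ n) :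
    ContDiff ℝ m (pd2 f) := by
  have hf' : Differentiable ℝ f := hf.differentiable fun hn => by simp [hn] at hmn
  rw [show pd2 f = fun q => fderiv ℝ f q (0, 1) from funext fun q => pd2_eq_fderiv (hf' q)]
  exact (hf.fderiv_right hmn).clm_apply contDiff_const

lemma ContDiff.differentiable_pd1 (hf : ContDiff ℝ 2 f) : Differentiable ℝ (pd1 f) :=
  (contDiff_pd1 (m := 1) hf (by norm_num)).differentiable one_ne_zero

lemma ContDiff.differentiable_pd2 (hf : ContDiff ℝ 2 f) : Differentiable ℝ (pd2 f) :=
  (contDiff_pd2 (m := 1) hf (by norm_num)).differentiable one_ne_zero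

lemma pd2_pd1_eq_pd1_pd2 (hf : ContDiff ℝ 2 f) (p : ℝ × ℝ) :
    pd2 (pd1 f) p = pd1 (pd2 f) p := by
  have hf' : Differentiable ℝ f := hf.differentiable two_ne_zero
  have hdf : Differentiable ℝ (fderiv ℝ f) :=
    (hf.fderiv_right (m := 1) (by norm_num)).differentiable one_ne_zero
  have hsymm : IsSymmSndFDerivAt ℝ f p :=
    hf.contDiffAt.isSymmSndFDerivAt (by simp [minSmoothness_of_isRCLikeNormedField])
  rw [show pd1 f = fun q => fderiv ℝ f q (1, 0) from funext fun q => pd1_eq_fderiv (hf' q),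
    show pd2 f = fun q => fderiv ℝ f q (0, 1) from funext fun q => pd2_eq_fderiv (hf' q),
    pd2_eq_fderiv ((hdf p).clm_apply (differentiableAt_const _)),
    pd1_eq_fderiv ((hdf p).clm_apply (differentiableAt_const _)),
    fderiv_clm_apply (hdf p) (differentiableAt_const _),
    fderiv_clm_apply (hdf p) (differentiableAt_const _)]
  simp [hsymm.eq (0, 1) (1, 0)]

lemma pd2_inv_sqrt (hf : DifferentiableAt ℝ f p) (hpos : 0 < f p) :
    pd2 (fun q => (√(f q))⁻¹) p = -pd2 f p / (2 * f p * √(f p)) := by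
  have hs : √(f p) ≠ 0 := (Real.sqrt_pos.mpr hpos).ne'
  have e : pd2 (fun q => (√(f q))⁻¹) p = _ := ((hf.hasDerivAt_pd2.sqrt hpos.ne').inv hs).deriv
  rw [e, Real.sq_sqrt hpos.le]
  field_simp

end PartialDerivatives

section SourceTerms

variable {Ψ : ℝ → ℝ} {φ : ℝ × ℝ → ℝ}

lemma differentiable_gmet (hΨ : ContDiff ℝ 2 Ψ) (hφ : ContDiff ℝ 2 φ) :
    Differentiable ℝ (gmet Ψ φ) := by
  have hdΨ : Differentiable ℝ (deriv Ψ) :=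
    (hΨ.iterate_deriv' 1 1).differentiable one_ne_zero
  have hA := hφ.differentiable_pd1
  have hB := hφ.differentiable_pd2
  unfold gmet
  fun_prop

lemma differentiable_invSqrtg (hΨ : ContDiff ℝ 2 Ψ) (hφ : ContDiff ℝ 2 φ)
    (hg : ∀ q, 0 < gmet Ψ φ q) : Differentiable ℝ (invSqrtg Ψ φ) := fun q =>
  ((differentiable_gmet hΨ hφ q).sqrt (hg q).ne').inv (Real.sqrt_pos.mpr (hg q)).ne'

lemma pd2_gmet (hφ : ContDiff ℝ 2 φ) (p : ℝ × ℝ) :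
    pd2 (gmet Ψ φ) p
      = -2 * (pd2 (pd1 φ) p * pd2 φ p + pd1 φ p * pd2 (pd2 φ) p)
        - 2 * deriv Ψ p.1 * pd2 (pd2 φ) p
        + 2 * (deriv Ψ p.1) ^ 2 * pd2 φ p * pd2 (pd2 φ) p := by
  have hA := (hφ.differentiable_pd1 p).hasDerivAt_pd2
  have hB := (hφ.differentiable_pd2 p).hasDerivAt_pd2
  refine ((((hasDerivAt_const p.2 (1 : ℝ)).sub ((hA.const_mul 2).mul hB)).sub
    (hB.const_mul (2 * deriv Ψ p.1))).add
      ((hB.pow 2).const_mul ((deriv Ψ p.1) ^ 2))).deriv.trans ?_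
  ring

lemma pd2_invSqrtg (hΨ : ContDiff ℝ 2 Ψ) (hφ : ContDiff ℝ 2 φ)
    (hg : ∀ q, 0 < gmet Ψ φ q) (p : ℝ × ℝ) :
    pd2 (invSqrtg Ψ φ) p = -pd2 (gmet Ψ φ) p / (2 * gmet Ψ φ p * √(gmet Ψ φ p)) :=
  pd2_inv_sqrt (differentiable_gmet hΨ hφ p) (hg p)

lemma ELexpr_eq (hΨ : ContDiff ℝ 2 Ψ) (hφ : ContDiff ℝ 2 φ)
    (hg : ∀ q, 0 < gmet Ψ φ q) (p : ℝ × ℝ) :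
    ELexpr Ψ φ p
      = (pd1 (pd2 φ) p + pd2 (pd1 φ) p - (deriv Ψ p.1) ^ 2 * pd2 (pd2 φ) p) * invSqrtg Ψ φ p
        + pd2 φ p * pd1 (invSqrtg Ψ φ) p
        + (pd1 φ p + deriv Ψ p.1 - (deriv Ψ p.1) ^ 2 * pd2 φ p) * pd2 (invSqrtg Ψ φ) p := by
  have hA := hφ.differentiable_pd1 p
  have hB := hφ.differentiable_pd2 p
  have hh := differentiable_invSqrtg hΨ hφ hg p
  have hflux_u : pd1 (fun q => pd2 φ q * invSqrtg Ψ φ q) p = _ :=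
    (hB.hasDerivAt_pd1.mul hh.hasDerivAt_pd1).deriv
  have hflux_ubar : pd2 (fun q => (pd1 φ q + deriv Ψ q.1 - (deriv Ψ q.1) ^ 2 * pd2 φ q)
      * invSqrtg Ψ φ q) p = _ :=
    (((hA.hasDerivAt_pd2.add_const (deriv Ψ p.1)).sub
      (hB.hasDerivAt_pd2.const_mul ((deriv Ψ p.1) ^ 2))).mul hh.hasDerivAt_pd2).deriv
  rw [ELexpr, hflux_u, hflux_ubar]
  simp only [Pi.sub_apply, Prod.mk.eta]
  ring

theorem S0tilde_sub_S0expr (hΨ : ContDiff ℝ 2 Ψ) (hφ : ContDiff ℝ 2 φ)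
    (hg : ∀ q, 0 < gmet Ψ φ q) (p : ℝ × ℝ) :
    S0tilde Ψ φ p - S0expr Ψ φ p
      = -((gring Ψ φ p - 1) / √(gmet Ψ φ p)) * ELexpr Ψ φ p := by
  simp only [S0tilde, S0expr]
  rw [ELexpr_eq hΨ hφ hg, pd2_invSqrtg hΨ hφ hg, pd2_gmet hφ, pd2_pd1_eq_pd1_pd2 hφ, invSqrtg]
  have hs : √(gmet Ψ φ p) ≠ 0 := (Real.sqrt_pos.mpr (hg p)).ne'
  have hgs : gmet Ψ φ p = √(gmet Ψ φ p) ^ 2 := (Real.sq_sqrt (hg p).le).symm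
  generalize √(gmet Ψ φ p) = s at hs hgs ⊢
  rw [hgs]
  field_simp
  ring

end SourceTerms

theorem source_terms_equivalent_general
    (Ψ : ℝ → ℝ) (φ : ℝ × ℝ → ℝ)
    (hΨ : ContDiff ℝ (⊤ : ℕ∞) Ψ) (hφ : ContDiff ℝ (⊤ : ℕ∞) φ)
    (hg : ∀ p : ℝ × ℝ, 0 < gmet Ψ φ p) :
    (∀ p : ℝ × ℝ,
      S0tilde Ψ φ p - S0expr Ψ φ p
        = -((gring Ψ φ p - 1) / Real.sqrt (gmet Ψ φ p)) * ELexpr Ψ φ p) ∧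
    ((∀ p : ℝ × ℝ, ELexpr Ψ φ p = 0) → ∀ p : ℝ × ℝ, S0tilde Ψ φ p = S0expr Ψ φ p) := by
  have hΨ2 : ContDiff ℝ 2 Ψ := hΨ.of_le (by norm_cast)
  have hφ2 : ContDiff ℝ 2 φ := hφ.of_le (by norm_cast)
  have key := S0tilde_sub_S0expr hΨ2 hφ2 hg
  refine ⟨key, fun hEL p => ?_⟩
  rw [← sub_eq_zero, key, hEL, mul_zero]

/-- **Equivalence of the two source terms (Remark A.2).**
For smooth `φ` with `g > 0` and `g̊ > 0` everywhere, the unconditional pointwise identity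
`S̃₀ − S₀ = −((g̊−1)/√g)·[∂_u(∂_ūφ·g^{−1/2}) + ∂_ū((∂_uφ + Ψ'(u) − (Ψ'(u))²∂_ūφ)·g^{−1/2})]`
holds; in particular `S̃₀ = S₀` at every point whenever `φ` satisfies the
Euler–Lagrange equation. -/
theorem source_terms_equivalent
    (Ψ : ℝ → ℝ) (φ : ℝ × ℝ → ℝ)
    (hΨ : ContDiff ℝ (⊤ : ℕ∞) Ψ) (hφ : ContDiff ℝ (⊤ : ℕ∞) φ)
    (hg : ∀ p : ℝ × ℝ, 0 < gmet Ψ φ p) (hgr : ∀ p : ℝ × ℝ, 0 < gring Ψ φ p) :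
    (∀ p : ℝ × ℝ,
      S0tilde Ψ φ p - S0expr Ψ φ p
        = -((gring Ψ φ p - 1) / Real.sqrt (gmet Ψ φ p)) * ELexpr Ψ φ p) ∧
    ((∀ p : ℝ × ℝ, ELexpr Ψ φ p = 0) → ∀ p : ℝ × ℝ, S0tilde Ψ φ p = S0expr Ψ φ p) :=
  source_terms_equivalent_general Ψ φ hΨ hφ hg
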